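/- arXiv:1504.01206 — 3 statements merged into one kernel-verified Lean document; each statement's English description precedes it below -/
import Mathlib

section
/- Let λ = (λ₁, …, λₙ) be a vector in the Gårding cone Γ_{k+1} (i.e. σ_m(λ) > 0 for all m = 1, …, k+1) with λ₁ ≥ λ₂ ≥ ⋯ ≥ λₙ. Then σ_k(λ) ≥ λ₁ λ₂ ⋯ λ_k ≥ λ_k^k. -/
/-- The `m`-th elementary symmetric polynomial of `x : Fin n → ℝ`. -/
noncomputable def esymm (n m : ℕ) (x : Fin n → ℝ) : ℝ :=
  ∑ s ∈ Finset.powersetCard m (Finset.univ : Finset (Fin n)), ∏ i ∈ s, x i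

/-!
Write `λ'` for `λ` with its largest entry `λ₁` removed. The key fact is that removing an entry
maps `Γ_{m+1}` into `Γ_m`. Granting it, `λ₁ > 0` because `σ₁(λ) > 0`, and by induction on `k`
`σ_k(λ) = σ_k(λ') + λ₁ σ_{k-1}(λ') ≥ λ₁ σ_{k-1}(λ') ≥ λ₁ λ₂ ⋯ λ_k`; iterating the removal also
gives `λ_k > 0`, whence the second inequality.

For the key fact, follow `λ + t𝟙` for `t ≥ 0`, where `𝟙 = (1,…,1)`. Its elementary symmetric
functions are polynomials in `t` with nonnegative coefficients, so the path stays in `Γ_{m+1}`, and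
for large `t` all entries are positive. By induction `λ' + t𝟙 ∈ Γ_{m-1}`, and `σ_m(λ' + t𝟙)` never
vanishes: if it did, Newton's inequality in its degenerate form `σ_m = 0 ⟹ σ_{m-1} σ_{m+1} ≤ 0`
would give `σ_{m+1}(λ + t𝟙) = σ_{m+1}(λ' + t𝟙) ≤ 0`. By continuity it is positive at `t = 0`.
-/

open Polynomial

namespace Polynomial

theorem Splits.derivative {p : ℝ[X]} (hp : p.Splits) : (Polynomial.derivative p).Splits := by
  rw [splits_iff_card_roots] at hp ⊢
  have := card_roots_le_derivative p
  have := natDegree_derivative_le p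
  have := card_roots' (Polynomial.derivative p)
  omega

theorem Splits.iterate_derivative {p : ℝ[X]} (hp : p.Splits) (d : ℕ) :
    (Polynomial.derivative^[d] p).Splits := by
  induction d with
  | zero => exact hp
  | succ d ih => rw [Function.iterate_succ_apply']; exact ih.derivative

/-- Multiplying by `X - a` turns `c₁² - 2c₀c₂` into `c₀² + a²(c₁² - 2c₀c₂)`. -/
theorem Splits.two_mul_coeff_zero_mul_coeff_two_le_sq {p : ℝ[X]} (hp : p.Splits) :
    2 * p.coeff 0 * p.coeff 2 ≤ p.coeff 1 ^ 2 := by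
  rw [hp.eq_prod_roots]
  generalize p.roots = s
  induction s using Multiset.induction_on with
  | empty => simp [coeff_C]
  | cons a s ih =>
    set q := C p.leadingCoeff * (s.map fun r => X - C r).prod
    have hq : C p.leadingCoeff * ((a ::ₘ s).map fun r => X - C r).prod = q * (X - C a) := by
      rw [Multiset.map_cons, Multiset.prod_cons]; ring
    rw [hq, coeff_mul_X_sub_C, coeff_mul_X_sub_C, mul_coeff_zero]
    simp only [coeff_sub, coeff_X_zero, coeff_C_zero]
    nlinarith [sq_nonneg (q.coeff 0), mul_nonneg (sq_nonneg a) (sub_nonneg.2 ih)]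

end Polynomial

namespace Multiset

section CommSemiring

variable {R : Type*} [CommSemiring R]

theorem esymm_zero (s : Multiset R) : s.esymm 0 = 1 := by
  simp [esymm]

theorem esymm_one (s : Multiset R) : s.esymm 1 = s.sum := by
  simp [esymm, powersetCard_one]

theorem esymm_eq_zero_of_card_lt {s : Multiset R} {j : ℕ} (h : card s < j) : s.esymm j = 0 := by
  simp [esymm, powersetCard_eq_empty _ h]

theorem esymm_cons_succ (a : R) (s : Multiset R) (j : ℕ) :
    (a ::ₘ s).esymm (j + 1) = s.esymm (j + 1) + a * s.esymm j := by
  simp only [esymm, powersetCard_cons, map_add, sum_add, map_map, ← sum_map_mul_left]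
  congr 2
  exact map_congr rfl fun t _ => prod_cons a t

theorem natDegree_prod_X_add_C_le (s : Multiset R) :
    (s.map fun r => X + C r).prod.natDegree ≤ card s := by
  refine (natDegree_multiset_prod_le _).trans ?_
  rw [map_map]
  refine (sum_map_le_sum_map _ (fun _ => 1) fun r _ => ?_).trans (by simp)
  exact natDegree_add_C.trans_le natDegree_X_le

theorem esymm_map_add (s : Multiset R) (t : R) {j : ℕ} (hj : j ≤ card s) :
    (s.map (· + t)).esymm j = ∑ l ∈ Finset.range (j + 1),
      ((l + (card s - j)).choose (card s - j) : R) * s.esymm (j - l) * t ^ l := by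
  set p := (s.map fun r => X + C r).prod
  have hp : ∀ i ≤ j, p.coeff (i + (card s - j)) = s.esymm (j - i) := fun i hi => by
    rw [prod_X_add_C_coeff s (by omega)]; congr 1; omega
  have htaylor : ((s.map (· + t)).map fun r => X + C r).prod = taylor t p := by
    simp only [p, taylor_apply, multiset_prod_comp, map_map, Function.comp_def, add_comp, X_comp,
      C_comp, add_assoc, ← C_add, add_comm t]
  have hdeg : (hasseDeriv (card s - j) p).natDegree < j + 1 := by
    have := natDegree_hasseDeriv_le p (card s - j)
    have : p.natDegree ≤ card s := natDegree_prod_X_add_C_le s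
    omega
  rw [← Nat.sub_sub_self hj, ← card_map (· + t) s, ← prod_X_add_C_coeff _ (by simp), htaylor,
    card_map, Nat.sub_sub_self hj, taylor_coeff, eval_eq_sum_range' hdeg]
  refine Finset.sum_congr rfl fun l hl => ?_
  rw [hasseDeriv_coeff, hp l (by simpa [Nat.lt_succ_iff] using hl)]

end CommSemiring

theorem esymm_pos {R : Type*} [CommSemiring R] [PartialOrder R] [IsStrictOrderedRing R]
    {s : Multiset R} (hs : ∀ x ∈ s, 0 < x) {j : ℕ} (hj : j ≤ card s) :
    0 < s.esymm j := by
  have hne : powersetCard j s ≠ 0 := by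
    rw [← card_pos, card_powersetCard]; exact Nat.choose_pos hj
  simpa [esymm] using sum_lt_sum_of_nonempty (f := fun _ => (0 : R)) hne
    fun t ht => prod_pos fun x hx => hs x (mem_of_le (mem_powersetCard.1 ht).1 hx)

theorem continuous_esymm_map_add {R : Type*} [CommSemiring R] [TopologicalSpace R]
    [IsTopologicalSemiring R] (s : Multiset R) (j : ℕ) :
    Continuous fun t : R => (s.map (· + t)).esymm j := by
  simp only [esymm, powersetCard_map, map_map, Function.comp_def]
  exact continuous_multiset_sum _ fun _ _ => continuous_multiset_prod _ fun _ _ => by fun_prop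

/-- Differentiating `card s - (j + 2)` times keeps `∏ (X + r)` real-rooted and brings
`σ_{j+2}, σ_{j+1}, σ_j` to its three lowest coefficients, up to positive factors. -/
theorem esymm_mul_esymm_add_two_nonpos (s : Multiset ℝ) {j : ℕ} (h : s.esymm (j + 1) = 0) :
    s.esymm j * s.esymm (j + 2) ≤ 0 := by
  rcases lt_or_ge (card s) (j + 2) with hlt | hle
  · simp [esymm_eq_zero_of_card_lt hlt]
  set d := card s - (j + 2)
  set q := derivative^[d] (s.map fun r => X + C r).prod
  have hq : q.Splits :=
    (Splits.multisetProd fun f hf => by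
      obtain ⟨r, -, rfl⟩ := mem_map.1 hf; exact Splits.X_add_C r).iterate_derivative d
  have hcoeff : ∀ i ≤ 2, q.coeff i = (i + d).descFactorial d * s.esymm (j + 2 - i) := by
    intro i hi
    rw [coeff_iterate_derivative, prod_X_add_C_coeff _ (by omega), nsmul_eq_mul]
    congr 2
    omega
  have hD : ∀ i, (0 : ℝ) < (i + d).descFactorial d := fun i => by
    exact_mod_cast Nat.descFactorial_pos.2 (by omega)
  have := hq.two_mul_coeff_zero_mul_coeff_two_le_sq
  rw [hcoeff 0 (by omega), hcoeff 1 (by omega), hcoeff 2 (by omega)] at this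
  simp only [Nat.sub_zero, show j + 2 - 1 = j + 1 by omega, Nat.add_sub_cancel, h, mul_zero] at this
  nlinarith [mul_pos (hD 0) (hD 2)]

end Multiset

/-- The Gårding cone `Γ_m` on multisets of entries; the condition at `j = 0` is void as `σ₀ = 1`. -/
def gardingCone (m : ℕ) : Set (Multiset ℝ) := {s | ∀ j ≤ m, 0 < s.esymm j}

theorem gardingCone_antitone : Antitone gardingCone :=
  fun _ _ hmn _ hs j hj => hs j (hj.trans hmn)

namespace Multiset

theorem le_card_of_mem_gardingCone {s : Multiset ℝ} {m : ℕ} (hs : s ∈ gardingCone m) :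
    m ≤ card s := by
  by_contra! h
  exact (hs m le_rfl).ne' (esymm_eq_zero_of_card_lt h)

theorem map_add_mem_gardingCone {s : Multiset ℝ} {m : ℕ} (hs : s ∈ gardingCone m) {t : ℝ}
    (ht : 0 ≤ t) : s.map (· + t) ∈ gardingCone m := by
  intro j hj
  rw [esymm_map_add s t (hj.trans (le_card_of_mem_gardingCone hs))]
  refine Finset.sum_pos' (fun l hl => ?_) ⟨0, by simp, by simpa using hs j hj⟩
  have := hs (j - l) (by omega)
  positivity

theorem exists_esymm_map_add_pos (s : Multiset ℝ) {j : ℕ} (hj : j ≤ card s) :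
    ∃ T ≥ 0, 0 < (s.map (· + T)).esymm j := by
  obtain ⟨b, hb⟩ := s.finite_toSet.bddBelow
  refine ⟨|b| + 1, by positivity, esymm_pos (fun y hy => ?_) (by simpa using hj)⟩
  obtain ⟨x, hx, rfl⟩ := mem_map.1 hy
  linarith [hb hx, neg_abs_le b]

theorem esymm_succ_ne_zero_of_cons_mem_gardingCone {a : ℝ} {s : Multiset ℝ} {m : ℕ}
    (h : a ::ₘ s ∈ gardingCone (m + 2)) (hs : s ∈ gardingCone m) : s.esymm (m + 1) ≠ 0 := by
  intro h0
  have hcons := h (m + 2) le_rfl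
  rw [esymm_cons_succ, h0, mul_zero, add_zero] at hcons
  have := esymm_mul_esymm_add_two_nonpos s h0
  nlinarith [hs m le_rfl]

theorem mem_gardingCone_of_cons {a : ℝ} {s : Multiset ℝ} {m : ℕ}
    (h : a ::ₘ s ∈ gardingCone (m + 1)) : s ∈ gardingCone m := by
  induction m generalizing a s with
  | zero => intro j hj; simp [Nat.le_zero.1 hj, esymm_zero]
  | succ m ih =>
    have hs : s ∈ gardingCone m := ih (gardingCone_antitone (by omega) h)
    have hne : ∀ t ≥ (0 : ℝ), (s.map (· + t)).esymm (m + 1) ≠ 0 := fun t ht => by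
      have ht' : (a + t) ::ₘ s.map (· + t) ∈ gardingCone (m + 2) := by
        simpa using map_add_mem_gardingCone h ht
      exact esymm_succ_ne_zero_of_cons_mem_gardingCone ht'
        (ih (gardingCone_antitone (by omega) ht'))
    obtain ⟨T, hT0, hT⟩ := exists_esymm_map_add_pos s (j := m + 1) (by
      simpa using le_card_of_mem_gardingCone h)
    have h0 : 0 < (s.map (· + 0)).esymm (m + 1) := by
      by_contra! hle
      obtain ⟨t, ht, hzero⟩ := intermediate_value_Icc hT0
        (continuous_esymm_map_add s (m + 1)).continuousOn ⟨hle, hT.le⟩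
      exact hne t ht.1 hzero
    intro j hj
    rcases hj.lt_or_eq with hj | rfl
    · exact hs j (by omega)
    · simpa using h0

end Multiset

namespace List

theorem pos_of_cons_mem_gardingCone {a : ℝ} {l : List ℝ} (hl : (a :: l).Pairwise (· ≥ ·))
    (h : ((a :: l : List ℝ) : Multiset ℝ) ∈ gardingCone 1) : 0 < a := by
  by_contra! ha
  have hmax : ∀ x ∈ a :: l, x ≤ a := fun x hx => by
    rcases mem_cons.1 hx with rfl | hx
    exacts [le_rfl, rel_of_pairwise_cons hl hx]
  have hsum := h 1 le_rfl
  rw [Multiset.esymm_one, Multiset.sum_coe] at hsum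
  exact hsum.not_ge ((sum_le_card_nsmul _ a hmax).trans (nsmul_nonpos ha _))

theorem getElem_pos_of_mem_gardingCone {l : List ℝ} (hl : l.Pairwise (· ≥ ·)) {m : ℕ}
    (h : (l : Multiset ℝ) ∈ gardingCone (m + 1)) (hm : m < l.length) : 0 < l[m] := by
  induction m generalizing l with
  | zero =>
    obtain _ | ⟨a, l⟩ := l
    · simp at hm
    · exact pos_of_cons_mem_gardingCone hl h
  | succ m ih =>
    obtain _ | ⟨a, l⟩ := l
    · simp at hm
    · rw [← Multiset.cons_coe] at h
      exact ih hl.of_cons (Multiset.mem_gardingCone_of_cons h) (by simpa using hm)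

theorem prod_take_le_esymm {l : List ℝ} (hl : l.Pairwise (· ≥ ·)) {k : ℕ}
    (h : (l : Multiset ℝ) ∈ gardingCone (k + 1)) :
    (l.take k).prod ≤ (l : Multiset ℝ).esymm k := by
  induction k generalizing l with
  | zero => simp [Multiset.esymm_zero]
  | succ k ih =>
    obtain _ | ⟨a, l⟩ := l
    · exact absurd (Multiset.le_card_of_mem_gardingCone h) (by simp)
    have ha := pos_of_cons_mem_gardingCone hl (gardingCone_antitone (by omega) h)
    rw [← Multiset.cons_coe] at h ⊢
    have hl' := Multiset.mem_gardingCone_of_cons h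
    rw [take_succ_cons, prod_cons, Multiset.esymm_cons_succ]
    nlinarith [ih hl.of_cons hl', hl' (k + 1) le_rfl]

end List

theorem esymm_eq_esymm_ofFn (n m : ℕ) (x : Fin n → ℝ) :
    esymm n m x = ((List.ofFn x : List ℝ) : Multiset ℝ).esymm m := by
  rw [← Fin.univ_val_map, Finset.esymm_map_val]
  rfl

theorem stmt0 (n k : ℕ) (hk : 1 ≤ k) (hkn : k ≤ n - 1)
    (lam : Fin n → ℝ)
    (hGamma : ∀ m, 1 ≤ m → m ≤ k + 1 → 0 < esymm n m lam)
    (hdec : ∀ i j : Fin n, i ≤ j → lam j ≤ lam i) :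
    esymm n k lam ≥ ∏ i ∈ Finset.univ.filter (fun i : Fin n => (i : ℕ) < k), lam i ∧
      (∏ i ∈ Finset.univ.filter (fun i : Fin n => (i : ℕ) < k), lam i) ≥
        lam ⟨k - 1, by omega⟩ ^ k := by
  have hsorted : (List.ofFn lam).Pairwise (· ≥ ·) :=
    List.pairwise_ofFn.2 fun i j hij => hdec i j hij.le
  have hcone : ((List.ofFn lam : List ℝ) : Multiset ℝ) ∈ gardingCone (k + 1) := by
    intro j hj
    rcases Nat.eq_zero_or_pos j with rfl | hj0
    · simp [Multiset.esymm_zero]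
    · rw [← esymm_eq_esymm_ofFn]; exact hGamma j hj0 hj
  have hpos : 0 < lam ⟨k - 1, by omega⟩ := by
    have := List.getElem_pos_of_mem_gardingCone hsorted (m := k - 1)
      (gardingCone_antitone (by omega) hcone) (by simp; omega)
    rwa [List.getElem_ofFn] at this
  refine ⟨?_, ?_⟩
  · rw [esymm_eq_esymm_ofFn, ← List.prod_take_ofFn]
    exact List.prod_take_le_esymm hsorted hcone
  · calc lam ⟨k - 1, by omega⟩ ^ k
        = ∏ i ∈ Finset.univ.filter (fun i : Fin n => (i : ℕ) < k), lam ⟨k - 1, by omega⟩ := by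
          rw [Finset.prod_const, Fin.card_filter_val_lt, min_eq_right (by omega)]
      _ ≤ _ := Finset.prod_le_prod (fun _ _ => hpos.le) fun i hi =>
          hdec _ _ (Fin.mk_le_mk.2 (by simp at hi; omega))
end

section
/- Let u be a C² function on a domain Ω ⊂ ℝⁿ that is (k+1)-convex (the eigenvalue vector of D²u(x) lies in Γ_{k+1} for all x ∈ Ω) and satisfies σ_k(D²u) = f(x, u, ∇u) in Ω with sup_Ω f ≤ F. Then with K₀ = n·F^{1/k}, the matrix D²u(x) + K₀·I is positive semidefinite for every x ∈ Ω. -/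
/-- The Hessian matrix of `u : (Fin n → ℝ) → ℝ` at a point. -/
noncomputable def hessian (n : ℕ) (u : (Fin n → ℝ) → ℝ) (x : Fin n → ℝ) :
    Matrix (Fin n) (Fin n) ℝ :=
  fun i j => fderiv ℝ (fun y => fderiv ℝ u y (Pi.single j 1)) x (Pi.single i 1)

open Finset Polynomial
open scoped Nat

section ElementarySymmetric

variable {ι R : Type*}

noncomputable def esymmOn [CommSemiring R] (s : Finset ι) (m : ℕ) (y : ι → R) : R :=
  ∑ t ∈ s.powersetCard m, ∏ i ∈ t, y i

theorem Multiset.esymm_cons_succ_s2 [CommSemiring R] (a : R) (s : Multiset R) (m : ℕ) :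
    (a ::ₘ s).esymm (m + 1) = s.esymm (m + 1) + a * s.esymm m := by
  simp [Multiset.esymm, Multiset.powersetCard_cons, Multiset.sum_map_mul_left]

section CommSemiring

variable [CommSemiring R] (s : Finset ι) (y : ι → R)

theorem esymmOn_eq_esymm_map (m : ℕ) : esymmOn s m y = (s.val.map y).esymm m :=
  (s.esymm_map_val y m).symm

@[simp] theorem esymmOn_zero : esymmOn s 0 y = 1 := by simp [esymmOn]

theorem esymmOn_one : esymmOn s 1 y = ∑ i ∈ s, y i := by
  simp [esymmOn, powersetCard_one]

theorem esymmOn_card : esymmOn s #s y = ∏ i ∈ s, y i := by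
  simp [esymmOn]

theorem esymmOn_eq_zero_of_card_lt {m : ℕ} (h : #s < m) : esymmOn s m y = 0 := by
  simp [esymmOn, powersetCard_eq_empty.2 h]

variable [DecidableEq ι] {s} {a : ι}

theorem esymmOn_insert (ha : a ∉ s) (m : ℕ) :
    esymmOn (insert a s) (m + 1) y = esymmOn s (m + 1) y + y a * esymmOn s m y := by
  simp only [esymmOn_eq_esymm_map, insert_val_of_notMem ha, Multiset.map_cons,
    Multiset.esymm_cons_succ_s2]

theorem esymmOn_erase (ha : a ∈ s) (m : ℕ) :
    esymmOn s (m + 1) y = esymmOn (s.erase a) (m + 1) y + y a * esymmOn (s.erase a) m y := by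
  rw [← esymmOn_insert y (notMem_erase a s), insert_erase ha]

end CommSemiring

theorem two_mul_esymmOn_two [CommRing R] (s : Finset ι) (y : ι → R) :
    2 * esymmOn s 2 y = (∑ i ∈ s, y i) ^ 2 - ∑ i ∈ s, y i ^ 2 := by
  classical
  induction s using Finset.induction_on with
  | empty => simp [esymmOn_eq_zero_of_card_lt _ _ (show #(∅ : Finset ι) < 2 by simp)]
  | insert a s ha ih =>
    rw [esymmOn_insert y ha, esymmOn_one, sum_insert ha, sum_insert ha, mul_add, ih]
    ring

theorem esymmOn_card_sub [Field R] {s : Finset ι} {y : ι → R} (hy : ∀ i ∈ s, y i ≠ 0) {j : ℕ}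
    (hj : j ≤ #s) : esymmOn s (#s - j) y = (∏ i ∈ s, y i) * esymmOn s j y⁻¹ := by
  classical
  rw [esymmOn, esymmOn, mul_sum]
  refine sum_nbij' (s \ ·) (s \ ·) ?_ ?_ ?_ ?_ ?_ <;> intro t ht <;>
    simp only [mem_powersetCard] at ht ⊢
  · exact ⟨sdiff_subset, by rw [card_sdiff_of_subset ht.1, ht.2]; omega⟩
  · exact ⟨sdiff_subset, by rw [card_sdiff_of_subset ht.1, ht.2]⟩
  · exact Finset.sdiff_sdiff_eq_self ht.1
  · exact Finset.sdiff_sdiff_eq_self ht.1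
  · have hne : ∏ i ∈ s \ t, y i ≠ 0 := prod_ne_zero_iff.2 fun i hi ↦ hy i (mem_sdiff.1 hi).1
    rw [← prod_sdiff ht.1, Pi.inv_def, prod_inv_distrib, mul_comm (∏ i ∈ s \ t, y i),
      mul_inv_cancel_right₀ hne]

theorem two_mul_card_mul_esymmOn_two_le [CommRing R] [LinearOrder R] [IsStrictOrderedRing R]
    (s : Finset ι) (y : ι → R) :
    2 * #s * esymmOn s 2 y ≤ (#s - 1) * esymmOn s 1 y ^ 2 := by
  have hcs := sq_sum_le_card_mul_sum_sq (s := s) (f := y)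
  have h2 := two_mul_esymmOn_two s y
  rw [esymmOn_one]
  linear_combination hcs + (#s : R) * h2

theorem esymmOn_newton_top [Field R] [LinearOrder R] [IsStrictOrderedRing R] {s : Finset ι}
    (y : ι → R) {N : ℕ} (hs : #s = N + 2) :
    2 * (N + 2) * (esymmOn s (N + 2) y * esymmOn s N y) ≤ (N + 1) * esymmOn s (N + 1) y ^ 2 := by
  by_cases hzero : ∃ i ∈ s, y i = 0
  · obtain ⟨i, hi, hyi⟩ := hzero
    rw [← hs, esymmOn_card, prod_eq_zero hi hyi, zero_mul, mul_zero]
    positivity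
  · have hy : ∀ i ∈ s, y i ≠ 0 := fun i hi hyi ↦ hzero ⟨i, hi, hyi⟩
    have h0 := esymmOn_card_sub hy (j := 0) (by omega)
    have h1 := esymmOn_card_sub hy (j := 1) (by omega)
    have h2 := esymmOn_card_sub hy (j := 2) (by omega)
    have hmac := two_mul_card_mul_esymmOn_two_le s y⁻¹
    simp only [hs, Nat.sub_zero, Nat.add_sub_cancel, esymmOn_zero, mul_one] at h0 h1 h2 hmac
    rw [show N + 2 - 1 = N + 1 by omega] at h1
    rw [h0, h1, h2]
    push_cast at hmac
    linear_combination (∏ i ∈ s, y i) ^ 2 * hmac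

end ElementarySymmetric

namespace Polynomial

theorem card_roots_derivative_eq {p : ℝ[X]} (hp : Multiset.card p.roots = p.natDegree) :
    Multiset.card (derivative p).roots = (derivative p).natDegree ∧
      (derivative p).natDegree = p.natDegree - 1 := by
  have := p.card_roots_le_derivative
  have := (derivative p).card_roots'
  have := p.natDegree_derivative_le
  omega

theorem card_roots_iterate_derivative_eq {p : ℝ[X]} (hp : Multiset.card p.roots = p.natDegree)
    (d : ℕ) : Multiset.card (derivative^[d] p).roots = (derivative^[d] p).natDegree ∧
      (derivative^[d] p).natDegree = p.natDegree - d := by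
  induction d with
  | zero => exact ⟨hp, rfl⟩
  | succ d ih =>
    rw [Function.iterate_succ_apply']
    have := card_roots_derivative_eq ih.1
    omega

variable {ι : Type*} (s : Finset ι) (y : ι → ℝ)

theorem natDegree_prod_X_add_C : (∏ i ∈ s, (X + C (y i))).natDegree = #s := by
  rw [natDegree_prod_of_monic _ _ fun i _ ↦ monic_X_add_C (y i)]
  simp

theorem card_roots_prod_X_add_C : Multiset.card (∏ i ∈ s, (X + C (y i))).roots = #s := by
  rw [roots_prod _ _ (prod_ne_zero_iff.2 fun i _ ↦ X_add_C_ne_zero (y i))]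
  simp [roots_X_add_C]

theorem coeff_iterate_derivative_prod_X_add_C {j d : ℕ} (h : j + d ≤ #s) :
    (derivative^[d] (∏ i ∈ s, (X + C (y i)))).coeff j * j ! =
      (j + d)! * esymmOn s (#s - (j + d)) y := by
  have hfac : j ! * (j + d).descFactorial d = (j + d)! := by
    simpa using Nat.factorial_mul_descFactorial (Nat.le_add_left d j)
  rw [coeff_iterate_derivative, Finset.prod_X_add_C_coeff s y h, nsmul_eq_mul, mul_right_comm,
    ← Nat.cast_mul, mul_comm _ (j !), hfac]
  rfl

theorem two_mul_coeff_zero_mul_coeff_two_le {g : ℝ[X]}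
    (hg : Multiset.card g.roots = g.natDegree) {N : ℕ} (hdeg : g.natDegree = N + 2) :
    2 * (N + 2) * (g.coeff 0 * g.coeff 2) ≤ (N + 1) * g.coeff 1 ^ 2 := by
  have hesymm (j : ℕ) : g.roots.esymm j = esymmOn g.roots.toEnumFinset j Prod.fst := by
    rw [esymmOn_eq_esymm_map, Multiset.map_toEnumFinset_fst]
  have hcard : #g.roots.toEnumFinset = N + 2 := by rw [Multiset.card_toEnumFinset, hg, hdeg]
  have hN := esymmOn_newton_top Prod.fst hcard
  have h0 := coeff_eq_esymm_roots_of_card hg (k := 0) (by omega)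
  have h1 := coeff_eq_esymm_roots_of_card hg (k := 1) (by omega)
  have h2 := coeff_eq_esymm_roots_of_card hg (k := 2) (by omega)
  simp only [hdeg, show N + 2 - 1 = N + 1 by omega, Nat.add_sub_cancel, Nat.sub_zero] at h0 h1 h2
  have h02 :
      g.coeff 0 * g.coeff 2 = g.leadingCoeff ^ 2 * (g.roots.esymm (N + 2) * g.roots.esymm N) := by
    rw [h0, h2]; ring_nf; rw [Even.neg_one_pow ⟨N, by ring⟩, mul_one]
  have h11 : g.coeff 1 ^ 2 = g.leadingCoeff ^ 2 * g.roots.esymm (N + 1) ^ 2 := by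
    rw [h1]; ring_nf; rw [Even.neg_one_pow ⟨N, by ring⟩, mul_one]
  rw [h02, h11, hesymm, hesymm, hesymm]
  linear_combination g.leadingCoeff ^ 2 * hN

end Polynomial

theorem factorial_succ_sq_le (d : ℕ) : (d + 1)! ^ 2 ≤ d ! * (d + 2)! := by
  rw [sq, Nat.factorial_succ (d + 1), Nat.factorial_succ d]
  nlinarith [Nat.factorial_pos d]

theorem esymmOn_newton {ι : Type*} (s : Finset ι) (y : ι → ℝ) {l : ℕ} (hl : l + 2 ≤ #s) :
    (l + 2) * (esymmOn s (l + 2) y * esymmOn s l y) ≤ (l + 1) * esymmOn s (l + 1) y ^ 2 := by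
  set d := #s - (l + 2)
  obtain ⟨hroots, hdeg⟩ := card_roots_iterate_derivative_eq (p := ∏ i ∈ s, (X + C (y i)))
    (by rw [card_roots_prod_X_add_C, natDegree_prod_X_add_C]) d
  rw [natDegree_prod_X_add_C] at hdeg
  have hN := two_mul_coeff_zero_mul_coeff_two_le hroots (N := l) (by omega)
  have h0 := coeff_iterate_derivative_prod_X_add_C s y (j := 0) (d := d) (by omega)
  have h1 := coeff_iterate_derivative_prod_X_add_C s y (j := 1) (d := d) (by omega)
  have h2 := coeff_iterate_derivative_prod_X_add_C s y (j := 2) (d := d) (by omega)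
  rw [show #s - (0 + d) = l + 2 by omega] at h0
  rw [show #s - (1 + d) = l + 1 by omega] at h1
  rw [show #s - (2 + d) = l by omega] at h2
  simp only [Nat.factorial_zero, Nat.factorial_one, Nat.factorial_two, Nat.cast_one, mul_one,
    zero_add, add_comm 1 d, add_comm 2 d] at h0 h1 h2
  rw [h0, h1, eq_div_of_mul_eq two_ne_zero h2] at hN
  have hfact : ((d + 1)! : ℝ) ^ 2 ≤ d ! * (d + 2)! := by exact_mod_cast factorial_succ_sq_le d
  have hpos : (0 : ℝ) < d ! * (d + 2)! := by positivity
  refine le_of_mul_le_mul_left ?_ hpos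
  linear_combination hN + ((l + 1) * esymmOn s (l + 1) y ^ 2) * hfact

theorem esymmOn_mul_esymmOn_le_sq {ι : Type*} (s : Finset ι) (y : ι → ℝ) {l : ℕ}
    (hl : l + 2 ≤ #s) : esymmOn s (l + 2) y * esymmOn s l y ≤ esymmOn s (l + 1) y ^ 2 := by
  have hN := esymmOn_newton s y hl
  rcases le_or_gt (esymmOn s (l + 2) y * esymmOn s l y) 0 with h | h
  · exact h.trans (sq_nonneg _)
  · nlinarith

theorem pow_ratio_mul_le_of_sq_le {e : ℕ → ℝ} {k : ℕ} (hpos : ∀ j ≤ k + 1, 0 < e j)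
    (hlc : ∀ j < k, e (j + 2) * e j ≤ e (j + 1) ^ 2) :
    (e (k + 1) / e k) ^ k * e 0 ≤ e k := by
  set r : ℕ → ℝ := fun j ↦ e (j + 1) / e j
  have hstep (j : ℕ) (hj : j < k) : r (j + 1) ≤ r j := by
    rw [div_le_div_iff₀ (hpos _ (by omega)) (hpos _ (by omega))]
    simpa [sq] using hlc j hj
  have hr (j : ℕ) (hj : j ≤ k) : r k ≤ r j :=
    Nat.decreasingInduction (motive := fun j _ ↦ r k ≤ r j) (fun j hj ih ↦ ih.trans (hstep j hj))
      le_rfl hj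
  have hrk : 0 < r k := div_pos (hpos _ le_rfl) (hpos _ (by omega))
  suffices ∀ j ≤ k, r k ^ j * e 0 ≤ e j from this k le_rfl
  intro j hj
  induction j with
  | zero => simp
  | succ j ih =>
    calc r k ^ (j + 1) * e 0 = r k * (r k ^ j * e 0) := by ring
      _ ≤ r j * e j := mul_le_mul (hr j (by omega)) (ih (by omega))
          (mul_nonneg (pow_nonneg hrk.le j) (hpos 0 (by omega)).le)
          (div_pos (hpos _ (by omega)) (hpos _ (by omega))).le
      _ = e (j + 1) := div_mul_cancel₀ _ (hpos j (by omega)).ne'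

section GardingCone

variable {ι : Type*} {s : Finset ι} {y : ι → ℝ}

/-- `y|_s ∈ Γ_M`. Including `m = 0` costs nothing, since `σ_0 = 1`. -/
def InGardingCone (M : ℕ) (s : Finset ι) (y : ι → ℝ) : Prop :=
  ∀ m ≤ M, 0 < esymmOn s m y

namespace InGardingCone

variable {M : ℕ}

theorem card_le (hy : InGardingCone M s y) : M ≤ #s := by
  by_contra h
  exact (hy M le_rfl).ne' (esymmOn_eq_zero_of_card_lt s y (not_le.1 h))

theorem erase [DecidableEq ι] (hy : InGardingCone M s y) {a : ι} (ha : a ∈ s) (hya : y a ≤ 0) :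
    InGardingCone M (s.erase a) y := by
  intro m hm
  induction m with
  | zero => simp
  | succ m ih =>
    have := esymmOn_erase y ha m
    nlinarith [hy (m + 1) hm, ih (by omega)]

theorem pow_le_esymmOn {k : ℕ} (hy : InGardingCone (k + 1) s y) :
    (esymmOn s (k + 1) y / esymmOn s k y) ^ k ≤ esymmOn s k y := by
  have hcard := hy.card_le
  simpa using pow_ratio_mul_le_of_sq_le (e := fun j ↦ esymmOn s j y) hy
    fun j hj ↦ esymmOn_mul_esymmOn_le_sq s y (by omega)

theorem neg_pow_le [DecidableEq ι] {k : ℕ} (hy : InGardingCone (k + 2) s y) {a : ι} (ha : a ∈ s)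
    (hya : y a < 0) : (-y a) ^ (k + 1) ≤ (#s : ℝ) ^ (k + 1) * esymmOn s (k + 1) y := by
  set v := s.erase a
  have hv : InGardingCone (k + 2) v y := hy.erase ha hya.le
  have hcard : k + 2 ≤ #v := hv.card_le
  have hcard' : #v + 1 = #s := card_erase_add_one ha
  set ρ := esymmOn v (k + 2) y / esymmOn v (k + 1) y
  have hρ : -y a < ρ := by
    rw [lt_div_iff₀ (hv _ (by omega))]
    linarith [esymmOn_erase y ha (k + 1), hy (k + 2) le_rfl]
  have hpow : ρ ^ (k + 1) ≤ esymmOn v (k + 1) y := hv.pow_le_esymmOn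
  have hnewton : (k + 2) * (ρ * esymmOn v k y) ≤ (k + 1) * esymmOn v (k + 1) y := by
    have hρ' : ρ * esymmOn v (k + 1) y = esymmOn v (k + 2) y :=
      div_mul_cancel₀ _ (hv _ (by omega)).ne'
    refine le_of_mul_le_mul_right ?_ (hv (k + 1) (by omega))
    linear_combination esymmOn_newton v y hcard + (k + 2) * esymmOn v k y * hρ'
  have hdrop : esymmOn v (k + 1) y ≤ (k + 2) * esymmOn s (k + 1) y := by
    have herase : esymmOn s (k + 1) y = esymmOn v (k + 1) y + y a * esymmOn v k y :=
      esymmOn_erase y ha k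
    nlinarith [mul_le_mul_of_nonneg_right hρ.le (hv k (by omega)).le]
  have hcs : (k + 2 : ℝ) ≤ (#s : ℝ) ^ (k + 1) := by
    calc (k + 2 : ℝ) ≤ #s := by exact_mod_cast (by omega : k + 2 ≤ #s)
      _ ≤ (#s : ℝ) ^ (k + 1) := le_self_pow₀ (by exact_mod_cast (by omega : 1 ≤ #s)) (by omega)
  calc (-y a) ^ (k + 1) ≤ ρ ^ (k + 1) := pow_le_pow_left₀ (by linarith) hρ.le _
    _ ≤ esymmOn v (k + 1) y := hpow
    _ ≤ (k + 2) * esymmOn s (k + 1) y := hdrop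
    _ ≤ (#s : ℝ) ^ (k + 1) * esymmOn s (k + 1) y :=
      mul_le_mul_of_nonneg_right hcs (hy _ (by omega)).le

theorem neg_le_card_mul_rpow [DecidableEq ι] {k : ℕ} (hk : 1 ≤ k) (hy : InGardingCone (k + 1) s y)
    {a : ι} (ha : a ∈ s) :
    -y a ≤ #s * esymmOn s k y ^ ((1 : ℝ) / k) := by
  obtain ⟨l, rfl⟩ : ∃ l, k = l + 1 := ⟨k - 1, by omega⟩
  have hσ := hy (l + 1) (by omega)
  have hrhs : 0 ≤ (#s : ℝ) * esymmOn s (l + 1) y ^ ((1 : ℝ) / ↑(l + 1)) := by positivity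
  rcases le_or_gt 0 (y a) with hya | hya
  · linarith
  · rw [← pow_le_pow_iff_left₀ (by linarith) hrhs (Nat.succ_ne_zero l), mul_pow, one_div,
      Real.rpow_inv_natCast_pow hσ.le (Nat.succ_ne_zero l)]
    exact hy.neg_pow_le ha hya

end InGardingCone

end GardingCone

theorem Matrix.IsHermitian.posSemidef_add_smul_one {n : Type*} [Fintype n] [DecidableEq n]
    {A : Matrix n n ℝ} (hA : A.IsHermitian) {c : ℝ} (hc : ∀ i, -c ≤ hA.eigenvalues i) :
    (A + c • 1).PosSemidef := by
  refine Matrix.posSemidef_iff_isHermitian_and_spectrum_nonneg.2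
    ⟨hA.add (Matrix.isHermitian_one.smul (IsSelfAdjoint.all c)), ?_⟩
  rw [← Algebra.algebraMap_eq_smul_one, ← spectrum.add_singleton_eq,
    hA.spectrum_real_eq_range_eigenvalues]
  rintro _ ⟨_, ⟨i, rfl⟩, _, rfl, rfl⟩
  simpa [neg_le_iff_add_nonneg] using hc i

theorem stmt2_general (n k : ℕ) (hk : 1 ≤ k)
    (Ω : Set (Fin n → ℝ))
    (u : (Fin n → ℝ) → ℝ)
    (f : (Fin n → ℝ) → ℝ → (Fin n → ℝ) → ℝ) (F K₀ : ℝ)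
    (hsym : ∀ x ∈ Ω, (hessian n u x).IsHermitian)
    -- `(k+1)`-convexity: the eigenvalues of the Hessian lie in the Gårding cone `Γ_{k+1}`
    (hconv : ∀ x (hx : x ∈ Ω), ∀ m, 1 ≤ m → m ≤ k + 1 →
      0 < esymm n m (hsym x hx).eigenvalues)
    -- the equation `σ_k(D²u) = f(x, u, ∇u)` in `Ω`
    (heq : ∀ x (hx : x ∈ Ω),
      esymm n k (hsym x hx).eigenvalues
        = f x (u x) (fun i => fderiv ℝ u x (Pi.single i 1)))
    -- `sup_Ω f ≤ F`
    (hfF : ∀ x ∈ Ω, f x (u x) (fun i => fderiv ℝ u x (Pi.single i 1)) ≤ F)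
    (hK₀ : K₀ = (n : ℝ) * F ^ ((1 : ℝ) / k)) :
    ∀ x ∈ Ω, (hessian n u x + K₀ • (1 : Matrix (Fin n) (Fin n) ℝ)).PosSemidef := by
  intro x hx
  set w := (hsym x hx).eigenvalues
  have hcone : InGardingCone (k + 1) univ w := by
    rintro (_ | m) hm
    · simp
    · exact hconv x hx (m + 1) (by omega) hm
  have hσF : esymmOn univ k w ^ ((1 : ℝ) / k) ≤ F ^ ((1 : ℝ) / k) :=
    Real.rpow_le_rpow (hcone k (by omega)).le ((heq x hx).trans_le (hfF x hx)) (by positivity)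
  refine (hsym x hx).posSemidef_add_smul_one fun i ↦ neg_le.1 ?_
  calc -w i ≤ #univ * esymmOn univ k w ^ ((1 : ℝ) / k) :=
        hcone.neg_le_card_mul_rpow hk (mem_univ i)
    _ ≤ K₀ := by rw [card_univ, Fintype.card_fin, hK₀]; gcongr

theorem stmt2 (n k : ℕ) (hk : 1 ≤ k) (hkn : k ≤ n - 1)
    (Ω : Set (Fin n → ℝ)) (hΩ : IsOpen Ω)
    (u : (Fin n → ℝ) → ℝ) (hu : ContDiffOn ℝ 2 u Ω)
    (f : (Fin n → ℝ) → ℝ → (Fin n → ℝ) → ℝ) (F K₀ : ℝ) (hF : 0 < F)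
    (hsym : ∀ x ∈ Ω, (hessian n u x).IsHermitian)
    -- `(k+1)`-convexity: the eigenvalues of the Hessian lie in the Gårding cone `Γ_{k+1}`
    (hconv : ∀ x (hx : x ∈ Ω), ∀ m, 1 ≤ m → m ≤ k + 1 →
      0 < esymm n m (hsym x hx).eigenvalues)
    -- the equation `σ_k(D²u) = f(x, u, ∇u)` in `Ω`
    (heq : ∀ x (hx : x ∈ Ω),
      esymm n k (hsym x hx).eigenvalues
        = f x (u x) (fun i => fderiv ℝ u x (Pi.single i 1)))
    -- `sup_Ω f ≤ F`
    (hfF : ∀ x ∈ Ω, f x (u x) (fun i => fderiv ℝ u x (Pi.single i 1)) ≤ F)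
    (hK₀ : K₀ = (n : ℝ) * F ^ ((1 : ℝ) / k)) :
    ∀ x ∈ Ω, (hessian n u x + K₀ • (1 : Matrix (Fin n) (Fin n) ℝ)).PosSemidef :=
  stmt2_general n k hk Ω u f F K₀ hsym hconv heq hfF hK₀
end

section
/- Second derivative formula for symmetric functions: let F be a C² symmetric function on an open set of n×n symmetric matrices, A a diagonal matrix with distinct diagonal entries κ₁, …, κₙ in the domain, and f the associated symmetric function of eigenvalues with F(A) = f(κ). Then for any symmetric matrix B, the second derivative of F at A in direction B equals Σ_{j,k} f̈^{jk} B_{jj} B_{kk} + 2 Σ_{j<k} (ḟ^j − ḟ^k)/(κ_j − κ_k) · B_{jk}², where ḟ^j = ∂f/∂κ_j and f̈^{jk} = ∂²f/∂κ_j∂κ_k. -/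
/-!
Let `H` be the Hessian of `F` at `A = diagonal κ`. Conjugation by a diagonal sign matrix fixes `A`
and preserves `F`, hence `H`; since it flips the sign of `E_pq + E_qp` when it flips exactly one of
`p`, `q`, all mixed terms vanish when a symmetric `B` is expanded in the basis `E_jj`,
`E_pq + E_qp` (`p < q`). The block on the `E_jj` is the Hessian of `f`. For the remaining terms,
let `R(θ)` be the rotation in the `(p, q)`-plane: `F` is constant along `θ ↦ R(θ)ᵀ A R(θ)`, a curve
with velocity `(κ_p - κ_q)(E_pq + E_qp)` and acceleration `2 (κ_q - κ_p)(E_pp - E_qq)` at `0`, so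
differentiating twice gives `(κ_p - κ_q)² H(E_pq + E_qp, E_pq + E_qp) = 2 (κ_p - κ_q)(ḟ^p - ḟ^q)`.
-/

open Topology Matrix

attribute [local instance] Matrix.frobeniusNormedAddCommGroup Matrix.frobeniusNormedSpace

section SecondDerivative

variable {E : Type*} [NormedAddCommGroup E] [NormedSpace ℝ E] {Ψ : Set E} {F : E → ℝ}

theorem deriv_deriv_comp_of_contDiff (hΨ : IsOpen Ψ) (hF : ContDiffOn ℝ 2 F Ψ)
    {M : ℝ → E} (hM : ContDiff ℝ 2 M) (h0 : M 0 ∈ Ψ) :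
    deriv (deriv fun t => F (M t)) 0 =
      fderiv ℝ (fderiv ℝ F) (M 0) (deriv M 0) (deriv M 0)
        + fderiv ℝ F (M 0) (deriv (deriv M) 0) := by
  have hFat : ∀ x ∈ Ψ, ContDiffAt ℝ 2 F x := fun x hx => hF.contDiffAt (hΨ.mem_nhds hx)
  have hM' : ∀ s, HasDerivAt M (deriv M s) s :=
    fun s => (hM.differentiable two_ne_zero s).hasDerivAt
  have hderiv : deriv (fun t => F (M t)) =ᶠ[𝓝 0] fun s => fderiv ℝ F (M s) (deriv M s) := by
    filter_upwards [hM.continuous.continuousAt.preimage_mem_nhds (hΨ.mem_nhds h0)] with s hs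
    exact (((hFat _ hs).differentiableAt two_ne_zero).hasFDerivAt.comp_hasDerivAt s
      (hM' s)).deriv
  have hDF : HasFDerivAt (fderiv ℝ F) (fderiv ℝ (fderiv ℝ F) (M 0)) (M 0) :=
    (((hFat _ h0).fderiv_right (m := 1) le_rfl).differentiableAt one_ne_zero).hasFDerivAt
  have hM'' : HasDerivAt (deriv M) (deriv (deriv M) 0) 0 :=
    ((hM.iterate_deriv' 1 1).differentiable one_ne_zero 0).hasDerivAt
  rw [hderiv.deriv_eq]
  exact ((hDF.comp_hasDerivAt 0 (hM' 0)).clm_apply hM'').deriv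

theorem deriv_deriv_comp_add_smul (hΨ : IsOpen Ψ) (hF : ContDiffOn ℝ 2 F Ψ) {A : E}
    (hA : A ∈ Ψ) (X : E) :
    deriv (deriv fun t : ℝ => F (A + t • X)) 0 = fderiv ℝ (fderiv ℝ F) A X X := by
  have hline : deriv (fun t : ℝ => A + t • X) = fun _ => X :=
    funext fun s => ((hasDerivAt_id s).smul_const X |>.const_add A).deriv.trans (one_smul ℝ X)
  have := deriv_deriv_comp_of_contDiff hΨ hF (M := fun t : ℝ => A + t • X)
    (contDiff_const.add (contDiff_id.smul contDiff_const)) (by simpa using hA)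
  rw [hline] at this
  simpa using this

theorem deriv_deriv_comp_add_smul_add_smul (hΨ : IsOpen Ψ) (hF : ContDiffOn ℝ 2 F Ψ)
    {A : E} (hA : A ∈ Ψ) (U V : E) {a b : ℝ → ℝ} (ha : ContDiff ℝ 2 a) (hb : ContDiff ℝ 2 b)
    (ha0 : a 0 = 0) (hb0 : b 0 = 0) :
    deriv (deriv fun s => F (A + a s • U + b s • V)) 0 =
      fderiv ℝ (fderiv ℝ F) A (deriv a 0 • U + deriv b 0 • V) (deriv a 0 • U + deriv b 0 • V)
        + fderiv ℝ F A (deriv (deriv a) 0 • U + deriv (deriv b) 0 • V) := by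
  have hderiv : ∀ {C : E} {a b : ℝ → ℝ}, Differentiable ℝ a → Differentiable ℝ b →
      deriv (fun s => C + a s • U + b s • V) = fun s => deriv a s • U + deriv b s • V :=
    fun ha hb => funext fun s =>
      ((((ha s).hasDerivAt.smul_const U).const_add _).add ((hb s).hasDerivAt.smul_const V)).deriv
  have hderiv' : deriv (fun s => deriv a s • U + deriv b s • V) =
      fun s => deriv (deriv a) s • U + deriv (deriv b) s • V := by
    simpa using hderiv ((ha.deriv' (n := 1)).differentiable one_ne_zero)
      ((hb.deriv' (n := 1)).differentiable one_ne_zero) (C := 0)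
  have h := deriv_deriv_comp_of_contDiff hΨ hF (M := fun s => A + a s • U + b s • V)
    (by fun_prop) (by simpa [ha0, hb0] using hA)
  rw [hderiv (ha.differentiable two_ne_zero) (hb.differentiable two_ne_zero), hderiv'] at h
  simpa [ha0, hb0] using h

theorem isSymmSndFDerivAt_of_contDiffOn (hΨ : IsOpen Ψ) (hF : ContDiffOn ℝ 2 F Ψ) {A : E}
    (hA : A ∈ Ψ) : IsSymmSndFDerivAt ℝ F A :=
  (hF.contDiffAt (hΨ.mem_nhds hA)).isSymmSndFDerivAt (by simp)

theorem ContinuousLinearMap.apply_map_map_of_apply_self_map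
    (H : E →L[ℝ] E →L[ℝ] ℝ) (hH : ∀ x y, H x y = H y x) (T : E →ₗ[ℝ] E)
    (hT : ∀ x, H (T x) (T x) = H x x) (x y : E) : H (T x) (T y) = H x y := by
  have h := hT (x + y)
  simp only [map_add, _root_.add_apply, hH (T y) (T x), hH y x, hT x, hT y] at h
  linarith

theorem fderiv_fderiv_apply_map_of_invariant (hΨ : IsOpen Ψ) (hF : ContDiffOn ℝ 2 F Ψ)
    {A : E} (hA : A ∈ Ψ) (T : E →ₗ[ℝ] E) (hTA : T A = A) (hFT : ∀ M ∈ Ψ, F (T M) = F M)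
    (X Y : E) : fderiv ℝ (fderiv ℝ F) A (T X) (T Y) = fderiv ℝ (fderiv ℝ F) A X Y := by
  refine ContinuousLinearMap.apply_map_map_of_apply_self_map _
    (isSymmSndFDerivAt_of_contDiffOn hΨ hF hA) T (fun X => ?_) X Y
  rw [← deriv_deriv_comp_add_smul hΨ hF hA, ← deriv_deriv_comp_add_smul hΨ hF hA]
  have hline : ContinuousAt (fun t : ℝ => A + t • X) 0 := by fun_prop
  have hFT' : (fun t : ℝ => F (A + t • T X)) =ᶠ[𝓝 0] fun t => F (A + t • X) := by
    filter_upwards [hline.preimage_mem_nhds (by simpa using hΨ.mem_nhds hA)] with t ht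
    simp only [← hFT _ ht, map_add, map_smul, hTA]
  exact hFT'.deriv.deriv_eq

variable {E' : Type*} [NormedAddCommGroup E'] [NormedSpace ℝ E'] {f : E' → ℝ}

theorem fderiv_apply_of_comp_eq (hΨ : IsOpen Ψ) (hF : ContDiffOn ℝ 2 F Ψ) (L : E' →L[ℝ] E)
    (hFf : ∀ μ, L μ ∈ Ψ → F (L μ) = f μ) {κ : E'} (hκ : L κ ∈ Ψ) (v : E') :
    fderiv ℝ f κ v = fderiv ℝ F (L κ) (L v) := by
  have hf : f =ᶠ[𝓝 κ] fun μ => F (L μ) := by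
    filter_upwards [L.continuous.continuousAt.preimage_mem_nhds (hΨ.mem_nhds hκ)] with μ hμ
    exact (hFf μ hμ).symm
  have hFL : HasFDerivAt (fun μ => F (L μ)) ((fderiv ℝ F (L κ)).comp L) κ :=
    ((hF.contDiffAt (hΨ.mem_nhds hκ)).differentiableAt two_ne_zero).hasFDerivAt.comp κ
      L.hasFDerivAt
  rw [hf.fderiv_eq, hFL.fderiv, ContinuousLinearMap.comp_apply]

theorem fderiv_fderiv_apply_of_comp_eq (hΨ : IsOpen Ψ) (hF : ContDiffOn ℝ 2 F Ψ)
    (L : E' →L[ℝ] E) (hFf : ∀ μ, L μ ∈ Ψ → F (L μ) = f μ) {κ : E'} (hκ : L κ ∈ Ψ) (v w : E') :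
    fderiv ℝ (fun μ => fderiv ℝ f μ w) κ v = fderiv ℝ (fderiv ℝ F) (L κ) (L v) (L w) := by
  have hf' : (fun μ => fderiv ℝ f μ w) =ᶠ[𝓝 κ] fun μ => fderiv ℝ F (L μ) (L w) := by
    filter_upwards [L.continuous.continuousAt.preimage_mem_nhds (hΨ.mem_nhds hκ)] with μ hμ
    exact fderiv_apply_of_comp_eq hΨ hF L hFf hμ w
  have hDF : HasFDerivAt (fderiv ℝ F) (fderiv ℝ (fderiv ℝ F) (L κ)) (L κ) :=
    (((hF.contDiffAt (hΨ.mem_nhds hκ)).fderiv_right (m := 1) le_rfl).differentiableAt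
      one_ne_zero).hasFDerivAt
  have hDFL : HasFDerivAt (fun μ => fderiv ℝ F (L μ)) ((fderiv ℝ (fderiv ℝ F) (L κ)).comp L) κ :=
    hDF.comp κ L.hasFDerivAt
  rw [hf'.fderiv_eq, (hDFL.clm_apply (hasFDerivAt_const (L w) κ)).fderiv]
  simp

end SecondDerivative

theorem mul_self_update_one_neg_one {ι : Type*} [DecidableEq ι] (i x : ι) :
    Function.update (1 : ι → ℝ) i (-1) x * Function.update (1 : ι → ℝ) i (-1) x = 1 := by
  rcases eq_or_ne x i with rfl | h <;> simp [*]

namespace Matrix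

variable {ι : Type*} [Fintype ι] [DecidableEq ι]

def symmSingle (p q : ι) : Matrix ι ι ℝ := single p q 1 + single q p 1

theorem diagonal_mul_single_one (d : ι → ℝ) (a b : ι) :
    diagonal d * single a b (1 : ℝ) = d a • single a b 1 := by
  ext i j
  by_cases h : a = i ∧ b = j
  · obtain ⟨rfl, rfl⟩ := h
    simp
  · simp [h]

theorem single_one_mul_diagonal (d : ι → ℝ) (a b : ι) :
    single a b (1 : ℝ) * diagonal d = d b • single a b 1 := by
  ext i j
  by_cases h : a = i ∧ b = j
  · obtain ⟨rfl, rfl⟩ := h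
    simp
  · simp [h]

theorem conj_diagonal_single (d : ι → ℝ) (a b : ι) :
    (diagonal d)ᵀ * single a b 1 * diagonal d = (d a * d b) • single a b 1 := by
  rw [diagonal_transpose, diagonal_mul_single_one, smul_mul, single_one_mul_diagonal, smul_smul]

theorem conj_diagonal_symmSingle (d : ι → ℝ) (p q : ι) :
    (diagonal d)ᵀ * symmSingle p q * diagonal d = (d p * d q) • symmSingle p q := by
  rw [symmSingle, mul_add, add_mul, conj_diagonal_single, conj_diagonal_single, mul_comm (d q),
    smul_add]

theorem diagonal_transpose_mul_diagonal_of_mul_self {ε : ι → ℝ} (hε : ∀ i, ε i * ε i = 1) :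
    (diagonal ε)ᵀ * diagonal ε = 1 := by
  simp [diagonal_mul_diagonal, hε]

theorem conj_diagonal_diagonal_of_mul_self {ε : ι → ℝ} (hε : ∀ i, ε i * ε i = 1)
    (κ : ι → ℝ) : (diagonal ε)ᵀ * diagonal κ * diagonal ε = diagonal κ := by
  simp only [diagonal_transpose, diagonal_mul_diagonal]
  congr 1
  funext i
  linear_combination κ i * hε i

noncomputable def rotation (p q : ι) (θ : ℝ) : Matrix ι ι ℝ :=
  1 + (Real.cos θ - 1) • (single p p 1 + single q q 1)
    + Real.sin θ • (single p q 1 - single q p 1)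

theorem rotation_transpose_mul_self {p q : ι} (hpq : p ≠ q) (θ : ℝ) :
    (rotation p q θ)ᵀ * rotation p q θ = 1 := by
  have h := Real.sin_sq_add_cos_sq θ
  simp only [rotation, transpose_add, transpose_smul, transpose_one, transpose_sub,
    transpose_single, mul_add, add_mul, sub_mul, mul_sub, smul_mul, Matrix.mul_smul, one_mul,
    mul_one, single_mul_single_same, single_mul_single_of_ne, hpq, hpq.symm, ne_eq,
    not_false_eq_true, add_zero, zero_add, sub_zero, zero_sub]
  match_scalars <;> grind

theorem rotation_conj_diagonal (κ : ι → ℝ) {p q : ι} (hpq : p ≠ q) (θ : ℝ) :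
    (rotation p q θ)ᵀ * diagonal κ * rotation p q θ =
      diagonal κ + ((κ q - κ p) * Real.sin θ ^ 2) • (single p p 1 - single q q 1)
        + ((κ p - κ q) * (Real.sin θ * Real.cos θ)) • symmSingle p q := by
  have h := Real.sin_sq_add_cos_sq θ
  simp only [rotation, symmSingle, transpose_add, transpose_smul, transpose_one, transpose_sub,
    transpose_single, mul_add, add_mul, sub_mul, mul_sub, smul_mul, Matrix.mul_smul, one_mul,
    mul_one, diagonal_mul_single_one, single_one_mul_diagonal, single_mul_single_same,
    single_mul_single_of_ne, hpq, hpq.symm, ne_eq, not_false_eq_true]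
  match_scalars <;> grind

section SignInvariant

variable (H : Matrix ι ι ℝ →L[ℝ] Matrix ι ι ℝ →L[ℝ] ℝ)

def IsSignInvariant : Prop :=
  ∀ ε : ι → ℝ, (∀ i, ε i * ε i = 1) → ∀ X Y,
    H ((diagonal ε)ᵀ * X * diagonal ε) ((diagonal ε)ᵀ * Y * diagonal ε) = H X Y

variable {H}

theorem IsSignInvariant.apply_eq_zero (hH : IsSignInvariant H) {ε : ι → ℝ}
    (hε : ∀ i, ε i * ε i = 1) {X Y : Matrix ι ι ℝ} {c d : ℝ}
    (hX : (diagonal ε)ᵀ * X * diagonal ε = c • X) (hY : (diagonal ε)ᵀ * Y * diagonal ε = d • Y)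
    (hcd : c * d = -1) : H X Y = 0 := by
  have h := hH ε hε X Y
  rw [hX, hY, map_smul, map_smul, _root_.smul_apply, smul_smul, smul_eq_mul, mul_comm d, hcd] at h
  linarith

theorem IsSignInvariant.apply_single_symmSingle (hH : IsSignInvariant H) (j : ι) {p q : ι}
    (hpq : p ≠ q) : H (single j j 1) (symmSingle p q) = 0 :=
  hH.apply_eq_zero (mul_self_update_one_neg_one p) (conj_diagonal_single _ j j)
    (conj_diagonal_symmSingle _ p q) (by simp [mul_self_update_one_neg_one, hpq.symm])

theorem IsSignInvariant.apply_symmSingle_symmSingle (hH : IsSignInvariant H) {p q r s i : ι}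
    (hpq : p ≠ q) (hi : i = p ∨ i = q) (hir : i ≠ r) (his : i ≠ s) :
    H (symmSingle p q) (symmSingle r s) = 0 := by
  refine hH.apply_eq_zero (mul_self_update_one_neg_one i) (conj_diagonal_symmSingle _ p q)
    (conj_diagonal_symmSingle _ r s) ?_
  rcases hi with rfl | rfl <;> simp [hpq, hpq.symm, hir.symm, his.symm]

theorem IsSignInvariant.apply_symmSingle_symmSingle_of_lt (hH : IsSignInvariant H)
    [LinearOrder ι] {p q r s : ι} (hpq : p < q) (hrs : r < s) (hne : (p, q) ≠ (r, s)) :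
    H (symmSingle p q) (symmSingle r s) = 0 := by
  by_cases hpr : p = r
  · subst hpr
    exact hH.apply_symmSingle_symmSingle hpq.ne (Or.inr rfl) hpq.ne' (by rintro rfl; exact hne rfl)
  by_cases hps : p = s
  · subst hps
    exact hH.apply_symmSingle_symmSingle hpq.ne (Or.inr rfl) (hrs.trans hpq).ne' hpq.ne'
  exact hH.apply_symmSingle_symmSingle hpq.ne (Or.inl rfl) hpr hps

end SignInvariant

section Decomposition

variable [LinearOrder ι]

theorem IsSymm.eq_sum_single_add_sum_symmSingle {B : Matrix ι ι ℝ} (hB : B.IsSymm) :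
    B = ∑ j, B j j • single j j 1 +
      ∑ p ∈ Finset.univ.filter (fun p : ι × ι => p.1 < p.2), B p.1 p.2 • symmSingle p.1 p.2 := by
  have hij : ∀ {i j : ι} (c : ι × ι), (c.1 = i ∧ c.2 = j) ↔ c = (i, j) :=
    fun c => by rw [Prod.ext_iff]
  have hji : ∀ {i j : ι} (c : ι × ι), (c.2 = i ∧ c.1 = j) ↔ c = (j, i) :=
    fun c => by rw [Prod.ext_iff, and_comm]
  simp only [smul_single, smul_eq_mul, mul_one, sum_single_eq_diagonal]
  ext i j
  simp only [add_apply, diagonal_apply, sum_apply, smul_apply, symmSingle, single_apply,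
    smul_eq_mul, mul_ite, mul_one, mul_zero, hij, hji, mul_add, Finset.sum_add_distrib,
    Finset.sum_ite_eq', Finset.mem_filter, Finset.mem_univ, true_and]
  rcases lt_trichotomy i j with h | rfl | h
  · rw [if_neg h.ne, if_pos h, if_neg h.not_gt, zero_add, add_zero]
  · simp
  · rw [if_neg h.ne', if_neg h.not_gt, if_pos h, zero_add, zero_add, hB.apply]

theorem IsSignInvariant.apply_self_of_isSymm {H : Matrix ι ι ℝ →L[ℝ] Matrix ι ι ℝ →L[ℝ] ℝ}
    (hsymm : ∀ X Y, H X Y = H Y X) (hH : IsSignInvariant H) {B : Matrix ι ι ℝ} (hB : B.IsSymm) :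
    H B B = ∑ j, ∑ k, H (single j j 1) (single k k 1) * B j j * B k k +
      ∑ p ∈ Finset.univ.filter (fun p : ι × ι => p.1 < p.2),
        H (symmSingle p.1 p.2) (symmSingle p.1 p.2) * B p.1 p.2 ^ 2 := by
  set P := Finset.univ.filter (fun p : ι × ι => p.1 < p.2)
  set D := ∑ j, B j j • single j j (1 : ℝ)
  set O := ∑ p ∈ P, B p.1 p.2 • symmSingle p.1 p.2
  have hDO : H D O = 0 := by
    simp only [D, O, map_sum, map_smul, _root_.sum_apply, _root_.smul_apply, smul_eq_mul,
      Finset.mul_sum]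
    refine Finset.sum_eq_zero fun p hp => Finset.sum_eq_zero fun j _ => ?_
    rw [hH.apply_single_symmSingle j (Finset.mem_filter.mp hp).2.ne, mul_zero, mul_zero]
  have hOO : H O O = ∑ p ∈ P, H (symmSingle p.1 p.2) (symmSingle p.1 p.2) * B p.1 p.2 ^ 2 := by
    simp only [O, map_sum, map_smul, _root_.sum_apply, _root_.smul_apply, smul_eq_mul]
    refine Finset.sum_congr rfl fun p hp => ?_
    rw [Finset.sum_eq_single_of_mem p hp fun r hr hrp => ?_]
    · ring
    · rw [hH.apply_symmSingle_symmSingle_of_lt (Finset.mem_filter.mp hr).2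
        (Finset.mem_filter.mp hp).2 (by simpa [Prod.ext_iff] using hrp), mul_zero]
  have hDD : H D D = ∑ j, ∑ k, H (single j j 1) (single k k 1) * B j j * B k k := by
    simp only [D, map_sum, map_smul, _root_.sum_apply, _root_.smul_apply, smul_eq_mul,
      Finset.mul_sum]
    rw [Finset.sum_comm]
    exact Finset.sum_congr rfl fun _ _ => Finset.sum_congr rfl fun _ _ => by ring
  calc H B B = H (D + O) (D + O) := by rw [← hB.eq_sum_single_add_sum_symmSingle]
    _ = H D D + (H D O + H D O) + H O O := by simp only [map_add, _root_.add_apply, hsymm O D]; ring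
    _ = _ := by rw [hDD, hDO, hOO, add_zero, add_zero]

end Decomposition

variable {Ψ : Set (Matrix ι ι ℝ)} {F : Matrix ι ι ℝ → ℝ}

theorem fderiv_fderiv_conj_of_orthogonal_invariant (hΨ : IsOpen Ψ) (hF : ContDiffOn ℝ 2 F Ψ)
    (hFinv : ∀ M ∈ Ψ, ∀ Q : Matrix ι ι ℝ, Qᵀ * Q = 1 → F (Qᵀ * M * Q) = F M)
    {A Q : Matrix ι ι ℝ} (hA : A ∈ Ψ) (hQ : Qᵀ * Q = 1) (hQA : Qᵀ * A * Q = A)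
    (X Y : Matrix ι ι ℝ) :
    fderiv ℝ (fderiv ℝ F) A (Qᵀ * X * Q) (Qᵀ * Y * Q) = fderiv ℝ (fderiv ℝ F) A X Y :=
  fderiv_fderiv_apply_map_of_invariant hΨ hF hA (LinearMap.mulRight ℝ Q ∘ₗ LinearMap.mulLeft ℝ Qᵀ)
    hQA (fun M hM => hFinv M hM Q hQ) X Y

theorem isSignInvariant_fderiv_fderiv (hΨ : IsOpen Ψ) (hF : ContDiffOn ℝ 2 F Ψ)
    (hFinv : ∀ M ∈ Ψ, ∀ Q : Matrix ι ι ℝ, Qᵀ * Q = 1 → F (Qᵀ * M * Q) = F M)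
    {κ : ι → ℝ} (hA : diagonal κ ∈ Ψ) : IsSignInvariant (fderiv ℝ (fderiv ℝ F) (diagonal κ)) :=
  fun _ hε => fderiv_fderiv_conj_of_orthogonal_invariant hΨ hF hFinv hA
    (diagonal_transpose_mul_diagonal_of_mul_self hε) (conj_diagonal_diagonal_of_mul_self hε _)

theorem fderiv_fderiv_symmSingle_symmSingle (hΨ : IsOpen Ψ) (hF : ContDiffOn ℝ 2 F Ψ)
    (hFinv : ∀ M ∈ Ψ, ∀ Q : Matrix ι ι ℝ, Qᵀ * Q = 1 → F (Qᵀ * M * Q) = F M)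
    {κ : ι → ℝ} (hA : diagonal κ ∈ Ψ) {p q : ι} (hκ : κ p ≠ κ q) :
    fderiv ℝ (fderiv ℝ F) (diagonal κ) (symmSingle p q) (symmSingle p q) =
      2 * (fderiv ℝ F (diagonal κ) (single p p 1) - fderiv ℝ F (diagonal κ) (single q q 1))
        / (κ p - κ q) := by
  have hpq : p ≠ q := fun h => hκ (congrArg κ h)
  set a : ℝ → ℝ := fun θ => (κ q - κ p) * Real.sin θ ^ 2
  set b : ℝ → ℝ := fun θ => (κ p - κ q) * (Real.sin θ * Real.cos θ)
  have hconst : (fun θ => F (diagonal κ + a θ • (single p p 1 - single q q 1)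
      + b θ • symmSingle p q)) = fun _ => F (diagonal κ) := by
    funext θ
    rw [← rotation_conj_diagonal κ hpq, hFinv _ hA _ (rotation_transpose_mul_self hpq θ)]
  have ha' : deriv a 0 = 0 := by simp [a]
  have hb' : deriv b 0 = κ p - κ q := by simp [b]
  have ha'' : deriv (deriv a) 0 = (κ q - κ p) * 2 := by simp [a]
  have hb'' : deriv (deriv b) 0 = 0 := by simp [b]
  have h := deriv_deriv_comp_add_smul_add_smul hΨ hF hA (single p p (1 : ℝ) - single q q 1)
    (symmSingle p q) (a := a) (b := b) (by fun_prop) (by fun_prop) (by simp [a]) (by simp [b])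
  rw [hconst, ha', hb', ha'', hb''] at h
  simp only [deriv_const', zero_smul, zero_add, add_zero, map_smul, _root_.smul_apply,
    smul_eq_mul, map_sub] at h
  -- `h` comes from a lemma about normed spaces, so its `fderiv` terms carry the Frobenius
  -- instances; restating it lets the elaborator identify them with the ones of the goal.
  have h' : 0 = (κ p - κ q) * ((κ p - κ q) *
      fderiv ℝ (fderiv ℝ F) (diagonal κ) (symmSingle p q) (symmSingle p q)) +
      (κ q - κ p) * 2 *
        (fderiv ℝ F (diagonal κ) (single p p 1) - fderiv ℝ F (diagonal κ) (single q q 1)) := h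
  have hκ' : κ p - κ q ≠ 0 := sub_ne_zero.mpr hκ
  rw [eq_div_iff hκ']
  exact mul_left_cancel₀ hκ' (by linear_combination -h')

theorem fderiv_apply_pi_single_of_diagonal (hΨ : IsOpen Ψ) (hF : ContDiffOn ℝ 2 F Ψ)
    {f : (ι → ℝ) → ℝ} (hFf : ∀ μ, diagonal μ ∈ Ψ → F (diagonal μ) = f μ) {κ : ι → ℝ}
    (hA : diagonal κ ∈ Ψ) (p : ι) :
    fderiv ℝ f κ (Pi.single p 1) = fderiv ℝ F (diagonal κ) (single p p 1) := by
  rw [← diagonal_single]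
  exact fderiv_apply_of_comp_eq hΨ hF (diagonalLinearMap ι ℝ ℝ).toContinuousLinearMap hFf hA _

theorem fderiv_fderiv_apply_pi_single_of_diagonal (hΨ : IsOpen Ψ) (hF : ContDiffOn ℝ 2 F Ψ)
    {f : (ι → ℝ) → ℝ} (hFf : ∀ μ, diagonal μ ∈ Ψ → F (diagonal μ) = f μ) {κ : ι → ℝ}
    (hA : diagonal κ ∈ Ψ) (j k : ι) :
    fderiv ℝ (fun μ => fderiv ℝ f μ (Pi.single k 1)) κ (Pi.single j 1) =
      fderiv ℝ (fderiv ℝ F) (diagonal κ) (single j j 1) (single k k 1) := by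
  rw [← diagonal_single, ← diagonal_single]
  exact fderiv_fderiv_apply_of_comp_eq hΨ hF (diagonalLinearMap ι ℝ ℝ).toContinuousLinearMap hFf
    hA _ _

variable [LinearOrder ι] in
theorem fderiv_fderiv_apply_self_of_isSymm (hΨ : IsOpen Ψ) (hF : ContDiffOn ℝ 2 F Ψ)
    (hFinv : ∀ M ∈ Ψ, ∀ Q : Matrix ι ι ℝ, Qᵀ * Q = 1 → F (Qᵀ * M * Q) = F M)
    {κ : ι → ℝ} (hA : diagonal κ ∈ Ψ) {B : Matrix ι ι ℝ} (hB : B.IsSymm) :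
    fderiv ℝ (fderiv ℝ F) (diagonal κ) B B =
      ∑ j, ∑ k, fderiv ℝ (fderiv ℝ F) (diagonal κ) (single j j 1) (single k k 1) * B j j * B k k +
        ∑ p ∈ Finset.univ.filter (fun p : ι × ι => p.1 < p.2),
          fderiv ℝ (fderiv ℝ F) (diagonal κ) (symmSingle p.1 p.2) (symmSingle p.1 p.2) *
            B p.1 p.2 ^ 2 :=
  (isSignInvariant_fderiv_fderiv hΨ hF hFinv hA).apply_self_of_isSymm
    (isSymmSndFDerivAt_of_contDiffOn hΨ hF hA) hB

end Matrix

open Matrix in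
attribute [local instance] Matrix.frobeniusNormedAddCommGroup Matrix.frobeniusNormedSpace in

theorem stmt17 (n : ℕ)
    (Ψ : Set (Matrix (Fin n) (Fin n) ℝ)) (hΨ : IsOpen Ψ)
    (F : Matrix (Fin n) (Fin n) ℝ → ℝ) (hF : ContDiffOn ℝ 2 F Ψ)
    -- `F` is orthogonally invariant (a symmetric function of matrices)
    (hΨinv : ∀ M ∈ Ψ, ∀ Q : Matrix (Fin n) (Fin n) ℝ, Qᵀ * Q = 1 → Qᵀ * M * Q ∈ Ψ)
    (hFinv : ∀ M ∈ Ψ, ∀ Q : Matrix (Fin n) (Fin n) ℝ, Qᵀ * Q = 1 → F (Qᵀ * M * Q) = F M)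
    -- `f` is the associated symmetric function of the eigenvalues: `F(diag κ) = f(κ)`
    (f : (Fin n → ℝ) → ℝ) (hf : ContDiff ℝ 2 f)
    (hFf : ∀ κ : Fin n → ℝ, Matrix.diagonal κ ∈ Ψ → F (Matrix.diagonal κ) = f κ)
    -- `A` is a diagonal matrix in `Ψ` with pairwise distinct eigenvalues
    (κ : Fin n → ℝ) (hκ : Function.Injective κ) (hA : Matrix.diagonal κ ∈ Ψ)
    (B : Matrix (Fin n) (Fin n) ℝ) (hB : B.IsSymm) :
    iteratedDeriv 2 (fun t : ℝ => F (Matrix.diagonal κ + t • B)) 0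
      = (∑ j : Fin n, ∑ k : Fin n,
          fderiv ℝ (fun μ => fderiv ℝ f μ (Pi.single k 1)) κ (Pi.single j 1)
            * B j j * B k k)
        + 2 * ∑ p ∈ Finset.univ.filter (fun p : Fin n × Fin n => p.1 < p.2),
            (fderiv ℝ f κ (Pi.single p.1 1) - fderiv ℝ f κ (Pi.single p.2 1))
              / (κ p.1 - κ p.2) * B p.1 p.2 ^ 2 := by
  have hsecond : iteratedDeriv 2 (fun t : ℝ => F (diagonal κ + t • B)) 0 =
      fderiv ℝ (fderiv ℝ F) (diagonal κ) B B := by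
    rw [iteratedDeriv_succ, iteratedDeriv_one]
    exact deriv_deriv_comp_add_smul hΨ hF hA B
  rw [hsecond, fderiv_fderiv_apply_self_of_isSymm hΨ hF hFinv hA hB, Finset.mul_sum]
  congr 1
  · refine Finset.sum_congr rfl fun j _ => Finset.sum_congr rfl fun k _ => ?_
    rw [fderiv_fderiv_apply_pi_single_of_diagonal hΨ hF hFf hA]
  · refine Finset.sum_congr rfl fun p hp => ?_
    have hκp : κ p.1 ≠ κ p.2 := hκ.ne (Finset.mem_filter.mp hp).2.ne
    rw [fderiv_fderiv_symmSingle_symmSingle hΨ hF hFinv hA hκp,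
      fderiv_apply_pi_single_of_diagonal hΨ hF hFf hA,
      fderiv_apply_pi_single_of_diagonal hΨ hF hFf hA]
    ring
end
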